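/- (Lyapunov derivative identity for constant slip.) Fix constants a_l > 0, a_r > 0 and reals v (= v_ref) and w (= ω_ref). Let F : ℝ⁵ → ℝ⁵ be the nominal closed-loop error vector field defined in the context, and let V_a : ℝ⁵ → ℝ be V_a(e₁, e₂, e₃, ã_l, ã_r) = e₁²/2 + (e₂ + k₃·e₃)²/2 + (1 − cos e₃)/k₂ + ã_l²/(2·γ₁·a_l) + ã_r²/(2·γ₂·a_r). Then for every e_a ∈ ℝ⁵, the directional derivative of V_a along F satisfies ∇V_a(e_a) · F(e_a) = −k₁·e₁² − (v/2)·k₂·k₃·(e₂ + k₃·e₃)² − (v/(2·k₂·k₃))·sin² e₃. -/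
import Mathlib


/-- The nominal closed-loop error vector field `F : ℝ⁵ → ℝ⁵` (constant reference inputs
`v, w` and constant slip parameters `a_l, a_r`). -/
noncomputable def Fnom (b k1 k2 k3 γ1 γ2 v w al ar : ℝ) (e : Fin 5 → ℝ) : Fin 5 → ℝ :=
  let e1 := e 0
  let e2 := e 1
  let e3 := e 2
  let tl := e 3
  let tr := e 4
  let ωc := w + (v / 2) * (k2 * (e2 + k3 * e3) + (1 / k3) * Real.sin e3)
  let vc := v * Real.cos e3 - k3 * e3 * ωc + k1 * e1
  let Δr := 1 + tr / ar
  let Δl := 1 + tl / al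
  let Ω1 := vc + (b / 2) * ωc
  let Ω2 := vc - (b / 2) * ωc
  let Ω3 := e2 / b - 1 / 2
  let Ω4 := e2 / b + 1 / 2
  ![Δr * Ω3 * Ω1 + v * Real.cos e3 - Δl * Ω4 * Ω2,
    Δl * Ω2 * e1 / b + v * Real.sin e3 - Δr * Ω1 * e1 / b,
    w - Δr * Ω1 / b + Δl * Ω2 / b,
    γ1 * Ω2 * (Ω4 * e1 - ((e1 + k3) / b) * (e2 + k3 * e3) - Real.sin e3 / (b * k2)),
    γ2 * Ω1 * (-(Ω3 * e1) + ((e1 + k3) / b) * (e2 + k3 * e3) + Real.sin e3 / (b * k2))]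

/-- The adaptive Lyapunov function `V_a`. -/
noncomputable def Va (k2 k3 γ1 γ2 al ar : ℝ) (e : Fin 5 → ℝ) : ℝ :=
  (e 0) ^ 2 / 2 + (e 1 + k3 * e 2) ^ 2 / 2 + (1 - Real.cos (e 2)) / k2
    + (e 3) ^ 2 / (2 * γ1 * al) + (e 4) ^ 2 / (2 * γ2 * ar)


lemma fderiv_Va (k2 k3 γ1 γ2 al ar : ℝ) (e u : Fin 5 → ℝ) :
    fderiv ℝ (Va k2 k3 γ1 γ2 al ar) e u =
      e 0 * u 0 + (e 1 + k3 * e 2) * (u 1 + k3 * u 2) + Real.sin (e 2) / k2 * u 2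
        + e 3 * u 3 / (γ1 * al) + e 4 * u 4 / (γ2 * ar) := by
  have h0 := hasFDerivAt_apply (𝕜:=ℝ) 0 e
  have h1 := hasFDerivAt_apply (𝕜:=ℝ) 1 e
  have h2 := hasFDerivAt_apply (𝕜:=ℝ) 2 e
  have h3 := hasFDerivAt_apply (𝕜:=ℝ) 3 e
  have h4 := hasFDerivAt_apply (𝕜:=ℝ) 4 e
  have H : HasFDerivAt (Va k2 k3 γ1 γ2 al ar) _ e :=
    (((((hasDerivAt_pow 2 (e 0)).comp_hasFDerivAt e h0).mul_const (2:ℝ)⁻¹).add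
      (((hasDerivAt_pow 2 (e 1 + k3 * e 2)).comp_hasFDerivAt e
        (h1.add (h2.const_mul k3))).mul_const (2:ℝ)⁻¹)).add
      ((((Real.hasDerivAt_cos (e 2)).comp_hasFDerivAt e h2).const_sub 1).mul_const k2⁻¹)).add
      ((((hasDerivAt_pow 2 (e 3)).comp_hasFDerivAt e h3)).mul_const (2*γ1*al)⁻¹) |>.add
      ((((hasDerivAt_pow 2 (e 4)).comp_hasFDerivAt e h4)).mul_const (2*γ2*ar)⁻¹)
  rw [H.fderiv]
  simp [ContinuousLinearMap.proj_apply]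
  ring

set_option maxHeartbeats 2000000 in
/-- the Lyapunov derivative identity
`∇V_a(e_a) · F(e_a) = −k₁e₁² − (v/2)k₂k₃(e₂ + k₃e₃)² − (v/(2k₂k₃))sin²e₃`. -/
theorem stmt12 (b k1 k2 k3 γ1 γ2 : ℝ)
    (hb : 0 < b) (hk1 : 0 < k1) (hk2 : 0 < k2) (hk3 : 0 < k3)
    (hγ1 : 0 < γ1) (hγ2 : 0 < γ2)
    (v w al ar : ℝ) (hal : 0 < al) (har : 0 < ar) :
    ∀ e : Fin 5 → ℝ,
      fderiv ℝ (Va k2 k3 γ1 γ2 al ar) e (Fnom b k1 k2 k3 γ1 γ2 v w al ar e) =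
        -(k1 * (e 0) ^ 2) - (v / 2) * k2 * k3 * (e 1 + k3 * e 2) ^ 2
          - (v / (2 * k2 * k3)) * Real.sin (e 2) ^ 2 := by
  intro e
  rw [fderiv_Va]
  simp only [Fnom, Matrix.cons_val_zero, Matrix.cons_val_one, Matrix.head_cons,
    Matrix.cons_val_two, Matrix.tail_cons, Matrix.cons_val_three, Matrix.cons_val_four,
    Matrix.head_fin_const]
  set s := Real.sin (e 2)
  set c := Real.cos (e 2)
  field_simp
  ring
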